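/- arXiv:2503.09738 — 2 statements merged into one kernel-verified Lean document; each statement's English description precedes it below -/
import Mathlib

section
/- Let E be a normed vector space, p > 1, 0 ≤ α < 1, a, b ≥ 0, and x, y ∈ E. Then |a^p‖x‖^α − b^p‖y‖^α| ≤ C·(‖y‖^α·|a−b|·(a^{p−1}+b^{p−1}) + a^p·‖x−y‖^α) for some constant C depending only on p and α. -/
/-!
The inequality follows by splitting
`a^p ‖x‖^α - b^p ‖y‖^α = a^p (‖x‖^α - ‖y‖^α) + (a^p - b^p) ‖y‖^α`.
Since `t ↦ t^α` is subadditive for `α ≤ 1`, the map `x ↦ ‖x‖^α` is `α`-Hölder with constant `1`;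
by convexity of `t ↦ t^p`, `|a^p - b^p| ≤ p |a - b| (a^(p-1) + b^(p-1))`. Hence `C = p` works.
-/

open Real

namespace Real

lemma rpow_sub_rpow_le_abs_sub_rpow {α s t : ℝ} (hα0 : 0 ≤ α) (hα1 : α ≤ 1)
    (hs : 0 ≤ s) (ht : 0 ≤ t) : s ^ α - t ^ α ≤ |s - t| ^ α := by
  have hs_le : s ≤ t + |s - t| := by linarith [le_abs_self (s - t)]
  have := (rpow_le_rpow hs hs_le hα0).trans (rpow_add_le_add_rpow ht (abs_nonneg _) hα0 hα1)
  linarith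

lemma abs_rpow_sub_rpow_le {α s t : ℝ} (hα0 : 0 ≤ α) (hα1 : α ≤ 1)
    (hs : 0 ≤ s) (ht : 0 ≤ t) : |s ^ α - t ^ α| ≤ |s - t| ^ α :=
  abs_sub_le_iff.2
    ⟨rpow_sub_rpow_le_abs_sub_rpow hα0 hα1 hs ht,
      abs_sub_comm s t ▸ rpow_sub_rpow_le_abs_sub_rpow hα0 hα1 ht hs⟩

lemma rpow_sub_rpow_le_mul_rpow_sub_one {p a b : ℝ} (hp : 1 ≤ p) (hb : 0 ≤ b) (hba : b ≤ a) :
    a ^ p - b ^ p ≤ p * (a - b) * a ^ (p - 1) := by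
  rcases hba.eq_or_lt with rfl | hba
  · simp
  have hslope : slope (fun t : ℝ ↦ t ^ p) b a ≤ p * a ^ (p - 1) :=
    (convexOn_rpow hp).slope_le_of_hasDerivAt hb (hb.trans hba.le) hba
      (hasDerivAt_rpow_const (Or.inr hp))
  rw [slope_def_field, div_le_iff₀ (sub_pos.2 hba)] at hslope
  linarith

lemma abs_rpow_sub_rpow_le_mul {p a b : ℝ} (hp : 1 ≤ p) (ha : 0 ≤ a) (hb : 0 ≤ b) :
    |a ^ p - b ^ p| ≤ p * |a - b| * (a ^ (p - 1) + b ^ (p - 1)) := by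
  wlog hba : b ≤ a generalizing a b
  · rw [abs_sub_comm, abs_sub_comm a, add_comm]
    exact this hb ha (le_of_not_ge hba)
  have hmono : b ^ p ≤ a ^ p := rpow_le_rpow hb hba (by linarith)
  rw [abs_of_nonneg (sub_nonneg.2 hmono), abs_of_nonneg (sub_nonneg.2 hba)]
  have hbp : 0 ≤ p * (a - b) * b ^ (p - 1) :=
    mul_nonneg (mul_nonneg (by linarith) (sub_nonneg.2 hba)) (rpow_nonneg hb _)
  linarith [rpow_sub_rpow_le_mul_rpow_sub_one hp hb hba]

end Real

lemma abs_norm_rpow_sub_norm_rpow_le {E : Type*} [SeminormedAddCommGroup E] {α : ℝ}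
    (hα0 : 0 ≤ α) (hα1 : α ≤ 1) (x y : E) : |‖x‖ ^ α - ‖y‖ ^ α| ≤ ‖x - y‖ ^ α :=
  (abs_rpow_sub_rpow_le hα0 hα1 (norm_nonneg x) (norm_nonneg y)).trans
    (rpow_le_rpow (abs_nonneg _) (abs_norm_sub_norm_le x y) hα0)

theorem key_contraction_alpha_lt_one (p α : ℝ) (hp : 1 < p) (hα0 : 0 ≤ α) (hα1 : α < 1) :
    ∃ C : ℝ, 0 < C ∧ ∀ (E : Type) [NormedAddCommGroup E] [NormedSpace ℝ E]
      (a b : ℝ) (x y : E), 0 ≤ a → 0 ≤ b →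
      |a ^ p * ‖x‖ ^ α - b ^ p * ‖y‖ ^ α| ≤
        C * (‖y‖ ^ α * |a - b| * (a ^ (p - 1) + b ^ (p - 1)) + a ^ p * ‖x - y‖ ^ α) := by
  refine ⟨p, by linarith, fun E _ _ a b x y ha hb => ?_⟩
  have hap : 0 ≤ a ^ p := rpow_nonneg ha p
  have hy : 0 ≤ ‖y‖ ^ α := rpow_nonneg (norm_nonneg y) α
  have hxy : 0 ≤ a ^ p * ‖x - y‖ ^ α := mul_nonneg hap (rpow_nonneg (norm_nonneg _) α)
  calc |a ^ p * ‖x‖ ^ α - b ^ p * ‖y‖ ^ α|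
      = |a ^ p * (‖x‖ ^ α - ‖y‖ ^ α) + (a ^ p - b ^ p) * ‖y‖ ^ α| := by ring_nf
    _ ≤ a ^ p * |‖x‖ ^ α - ‖y‖ ^ α| + |a ^ p - b ^ p| * ‖y‖ ^ α := by
        grw [abs_add_le, abs_mul, abs_mul, abs_of_nonneg hap, abs_of_nonneg hy]
    _ ≤ a ^ p * ‖x - y‖ ^ α + p * |a - b| * (a ^ (p - 1) + b ^ (p - 1)) * ‖y‖ ^ α := by
        gcongr
        · exact abs_norm_rpow_sub_norm_rpow_le hα0 hα1.le x y
        · exact abs_rpow_sub_rpow_le_mul hp.le ha hb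
    _ ≤ p * (‖y‖ ^ α * |a - b| * (a ^ (p - 1) + b ^ (p - 1)) + a ^ p * ‖x - y‖ ^ α) := by
        linarith [mul_le_mul_of_nonneg_right hp.le hxy]
end

section
/- Let T > 0, 0 ≤ σ < 1, A ≥ 0, M > 0, and let ψ ∈ C([0,T]) be nonnegative satisfying ψ(t) ≤ A + M ∫₀^t (t−s)^{−σ} ψ(s) ds for all 0 ≤ t ≤ T. Then ψ(t) ≤ A·E_{1−σ}(M Γ(1−σ) t^{1−σ}) for all 0 ≤ t ≤ T, where E_{1−σ}(z) = Σ_{n≥0} z^n / Γ(n(1−σ)+1) is the Mittag-Leffler function. In particular, if A = 0, then ψ ≡ 0. -/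
open MeasureTheory Real intervalIntegral


lemma realBeta01 (a b : ℝ) (ha : 0 < a) (hb : 0 < b) :
    ∫ x in (0:ℝ)..1, x ^ (a-1) * (1-x) ^ (b-1) =
      Real.Gamma a * Real.Gamma b / Real.Gamma (a+b) := by
  have key : Complex.Gamma a * Complex.Gamma b
      = Complex.Gamma (a + b) * Complex.betaIntegral a b :=
    Complex.Gamma_mul_Gamma_eq_betaIntegral (by simpa using ha) (by simpa using hb)
  have hbeta : Complex.betaIntegral a b
      = ((∫ x in (0:ℝ)..1, x ^ (a-1) * (1-x) ^ (b-1) : ℝ) : ℂ) := by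
    rw [Complex.betaIntegral, ← intervalIntegral.integral_ofReal]
    refine intervalIntegral.integral_congr fun x hx => ?_
    rw [Set.uIcc_of_le (by norm_num : (0:ℝ) ≤ 1)] at hx
    obtain ⟨hx0, hx1⟩ := hx
    have e1 : ((a:ℂ) - 1) = ((a - 1 : ℝ) : ℂ) := by push_cast; ring
    have e2 : ((b:ℂ) - 1) = ((b - 1 : ℝ) : ℂ) := by push_cast; ring
    have e3 : (1 : ℂ) - (x:ℂ) = ((1 - x : ℝ) : ℂ) := by push_cast; ring
    rw [e1, e2, e3, ← Complex.ofReal_cpow hx0, ← Complex.ofReal_cpow (by linarith),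
      ← Complex.ofReal_mul]
  have hGpos : 0 < Real.Gamma (a + b) := Real.Gamma_pos_of_pos (by linarith)
  have h2 : Real.Gamma a * Real.Gamma b
      = Real.Gamma (a+b) * ∫ x in (0:ℝ)..1, x ^ (a-1) * (1-x) ^ (b-1) := by
    apply Complex.ofReal_injective
    rw [Complex.ofReal_mul, Complex.ofReal_mul, ← Complex.Gamma_ofReal,
      ← Complex.Gamma_ofReal, ← Complex.Gamma_ofReal, Complex.ofReal_add, key, hbeta]
  field_simp
  linarith [h2]


lemma realBetaScaled (a b t : ℝ) (ha : 0 < a) (hb : 0 < b) (ht : 0 < t) :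
    ∫ s in (0:ℝ)..t, s ^ (a-1) * (t-s) ^ (b-1) =
      Real.Gamma a * Real.Gamma b / Real.Gamma (a+b) * t ^ (a+b-1) := by
  have hsub := intervalIntegral.integral_comp_mul_right
    (fun s => s ^ (a-1) * (t-s) ^ (b-1)) ht.ne' (a := 0) (b := 1)
  simp only [zero_mul, one_mul, smul_eq_mul] at hsub
  have hcong : ∫ x in (0:ℝ)..1, (x * t) ^ (a-1) * (t - x * t) ^ (b-1)
      = ∫ x in (0:ℝ)..1, t ^ (a-1) * t ^ (b-1) * (x ^ (a-1) * (1-x) ^ (b-1)) := by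
    refine intervalIntegral.integral_congr fun x hx => ?_
    rw [Set.uIcc_of_le (by norm_num : (0:ℝ) ≤ 1)] at hx
    obtain ⟨hx0, hx1⟩ := hx
    have e : t - x * t = (1 - x) * t := by ring
    rw [e, Real.mul_rpow hx0 ht.le, Real.mul_rpow (by linarith) ht.le]
    ring
  rw [hcong, intervalIntegral.integral_const_mul, realBeta01 a b ha hb] at hsub
  have : (∫ s in (0:ℝ)..t, s ^ (a-1) * (t-s) ^ (b-1))
      = t * (t ^ (a-1) * t ^ (b-1) * (Real.Gamma a * Real.Gamma b / Real.Gamma (a+b))) := by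
    rw [hsub, ← mul_assoc, mul_inv_cancel₀ ht.ne', one_mul]
  rw [this, ← Real.rpow_add ht]
  nth_rewrite 1 [← Real.rpow_one t]
  rw [← mul_assoc, ← Real.rpow_add ht, show 1 + (a - 1 + (b - 1)) = a + b - 1 by ring]
  ring

lemma intInt (t K σ : ℝ) (ht : 0 < t) (hσ : σ < 1) (g : ℝ → ℝ)
    (hg : AEStronglyMeasurable g (volume.restrict (Set.Ioc 0 t)))
    (hK : ∀ s ∈ Set.Ioc (0:ℝ) t, |g s| ≤ K) :
    IntervalIntegrable (fun s => (t-s) ^ (-σ) * g s) volume 0 t := by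
  have hbase : IntervalIntegrable (fun s : ℝ => (t-s) ^ (-σ)) volume 0 t := by
    have h1 : IntervalIntegrable (fun s : ℝ => s ^ (-σ)) volume 0 t :=
      intervalIntegral.intervalIntegrable_rpow' (by linarith)
    have h2 := (h1.comp_sub_left t)
    exact (by simpa using h2 : IntervalIntegrable _ volume t 0).symm
  have hKint : IntervalIntegrable (fun s : ℝ => K * (t-s) ^ (-σ)) volume 0 t :=
    hbase.const_mul K
  apply hKint.mono_fun
  · apply AEStronglyMeasurable.mul
    · exact (Measurable.aestronglyMeasurable (by fun_prop)).restrict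
    · rwa [Set.uIoc_of_le ht.le]
  · rw [Set.uIoc_of_le ht.le]
    filter_upwards [ae_restrict_mem measurableSet_Ioc] with s hs
    obtain ⟨hs0, hst⟩ := hs
    have hts : (0:ℝ) ≤ t - s := by linarith
    have hrp : (0:ℝ) ≤ (t-s) ^ (-σ) := Real.rpow_nonneg hts _
    have hK0 : 0 ≤ K := le_trans (abs_nonneg _) (hK s ⟨hs0, hst⟩)
    simp only [norm_mul, Real.norm_eq_abs, abs_of_nonneg hrp]
    calc (t-s) ^ (-σ) * |g s| ≤ (t-s) ^ (-σ) * K :=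
          mul_le_mul_of_nonneg_left (hK s ⟨hs0, hst⟩) hrp
      _ = |K| * (t-s) ^ (-σ) := by rw [abs_of_nonneg hK0, mul_comm]

lemma ML_summable (β x : ℝ) (hβ : 0 < β) (hx : 0 ≤ x) :
    Summable (fun n : ℕ => x ^ n / Real.Gamma (n * β + 1)) := by
  set a : ℕ → ℝ := fun n => x ^ n / Real.Gamma (n * β + 1) with ha
  have hGpos : ∀ n : ℕ, 0 < Real.Gamma (n * β + 1) := fun n =>
    Real.Gamma_pos_of_pos (by positivity)
  have hanon : ∀ n, 0 ≤ a n := fun n => div_nonneg (pow_nonneg hx n) (hGpos n).le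
  obtain ⟨m, hm1, hmβ⟩ : ∃ m : ℕ, 1 ≤ m ∧ 1 ≤ (m:ℝ) * β := by
    refine ⟨max 1 ⌈1/β⌉₊, le_max_left _ _, ?_⟩
    have h1 : (1:ℝ)/β ≤ ⌈1/β⌉₊ := Nat.le_ceil _
    have h2 : ((⌈1/β⌉₊:ℕ) : ℝ) ≤ ((max 1 ⌈1/β⌉₊ : ℕ) : ℝ) := by
      exact_mod_cast le_max_right 1 ⌈1/β⌉₊
    calc (1:ℝ) = (1/β) * β := by field_simp
      _ ≤ ((max 1 ⌈1/β⌉₊ : ℕ):ℝ) * β := mul_le_mul_of_nonneg_right (h1.trans h2) hβ.le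
  obtain ⟨K, hK⟩ : ∃ K : ℕ, 2 * x ^ m ≤ (K:ℝ) * β + 1 := by
    refine ⟨⌈2 * x ^ m / β⌉₊, ?_⟩
    have h1 : 2 * x ^ m / β ≤ ⌈2 * x ^ m / β⌉₊ := Nat.le_ceil _
    have := mul_le_mul_of_nonneg_right h1 hβ.le
    rw [div_mul_cancel₀ _ hβ.ne'] at this
    linarith
  have hstep : ∀ k : ℕ, K ≤ k → a (k + m) ≤ (1/2) * a k := by
    intro k hk
    have hkβ : (K:ℝ) * β ≤ (k:ℝ) * β :=
      mul_le_mul_of_nonneg_right (by exact_mod_cast hk) hβ.le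
    have hmono : Real.Gamma ((k:ℝ) * β + 1 + 1) ≤ Real.Gamma (((k + m : ℕ):ℝ) * β + 1) := by
      have hk0 : (0:ℝ) ≤ (k:ℝ) * β := by positivity
      apply Real.Gamma_strictMonoOn_Ici.monotoneOn
      · simp only [Set.mem_Ici]; linarith
      · simp only [Set.mem_Ici]; push_cast; nlinarith
      · push_cast; nlinarith
    have h1 : Real.Gamma ((k:ℝ) * β + 1 + 1) = ((k:ℝ) * β + 1) * Real.Gamma ((k:ℝ)*β + 1) :=
      Real.Gamma_add_one (by positivity)
    have hden : ((k:ℝ) * β + 1) * Real.Gamma ((k:ℝ)*β + 1)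
        ≤ Real.Gamma (((k + m : ℕ):ℝ) * β + 1) := h1 ▸ hmono
    have h2 : a (k + m) ≤ x ^ (k + m) / (((k:ℝ) * β + 1) * Real.Gamma ((k:ℝ)*β + 1)) := by
      rw [ha]; dsimp only
      gcongr
    have h3 : x ^ (k + m) / (((k:ℝ) * β + 1) * Real.Gamma ((k:ℝ)*β + 1))
        = (x ^ m / ((k:ℝ) * β + 1)) * a k := by
      rw [ha]; dsimp only; rw [div_mul_div_comm, pow_add]; ring
    have h4 : x ^ m / ((k:ℝ) * β + 1) ≤ 1/2 := by
      rw [div_le_div_iff₀ (by positivity) (by norm_num)]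
      linarith
    calc a (k + m) ≤ (x ^ m / ((k:ℝ) * β + 1)) * a k := by rw [← h3]; exact h2
      _ ≤ (1/2) * a k := mul_le_mul_of_nonneg_right h4 (hanon k)
  set Amax : ℝ := ∑ i ∈ Finset.range (K + m), a i with hAmax
  have hAmax0 : 0 ≤ Amax := Finset.sum_nonneg fun i _ => hanon i
  have hle : ∀ i, i < K + m → a i ≤ Amax := fun i hi =>
    Finset.single_le_sum (fun j _ => hanon j) (Finset.mem_range.mpr hi)
  have bound : ∀ j : ℕ, a (K + j) ≤ Amax * (1/2 : ℝ) ^ (j / m) := by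
    intro j
    induction j using Nat.strong_induction_on with
    | _ j ih =>
      by_cases hj : j < m
      · rw [Nat.div_eq_of_lt hj, pow_zero, mul_one]
        exact hle _ (by omega)
      · push_neg at hj
        have e : K + j = (K + (j - m)) + m := by omega
        have h5 : a (K + j) ≤ (1/2) * a (K + (j - m)) := by
          rw [e]; exact hstep _ (by omega)
        have h6 := ih (j - m) (by omega)
        have e2 : j / m = (j - m) / m + 1 := Nat.div_eq_sub_div (by omega) hj
        calc a (K + j) ≤ (1/2) * (Amax * (1/2:ℝ) ^ ((j-m)/m)) := by
              refine h5.trans (mul_le_mul_of_nonneg_left h6 (by norm_num))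
          _ = Amax * (1/2:ℝ) ^ ((j-m)/m + 1) := by ring
          _ = Amax * (1/2:ℝ) ^ (j / m) := by rw [← e2]
  set r : ℝ := (1/2 : ℝ) ^ ((m:ℝ)⁻¹) with hr
  have hr0 : 0 ≤ r := Real.rpow_nonneg (by norm_num) _
  have hr1 : r < 1 := Real.rpow_lt_one (by norm_num) (by norm_num)
    (by positivity)
  have hgeo : ∀ j : ℕ, (1/2 : ℝ) ^ (j / m) ≤ 2 * r ^ j := by
    intro j
    have hmpos : (0:ℝ) < m := by exact_mod_cast hm1
    have hcast : (j:ℝ)/(m:ℝ) - 1 ≤ ((j / m : ℕ) : ℝ) := by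
      have := Nat.lt_mul_div_succ j (show 0 < m by omega)
      have : (j:ℝ) < (m:ℝ) * (((j/m : ℕ):ℝ) + 1) := by exact_mod_cast this
      rw [div_sub_one hmpos.ne', div_le_iff₀ hmpos]
      nlinarith
    calc (1/2 : ℝ) ^ (j / m) = (1/2 : ℝ) ^ (((j / m : ℕ):ℝ)) := by
          rw [Real.rpow_natCast]
      _ ≤ (1/2 : ℝ) ^ ((j:ℝ)/(m:ℝ) - 1) :=
          Real.rpow_le_rpow_of_exponent_ge (by norm_num) (by norm_num) hcast
      _ = 2 * r ^ j := by
          rw [Real.rpow_sub (by norm_num), Real.rpow_one,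
            show (j:ℝ)/(m:ℝ) = (m:ℝ)⁻¹ * j by ring,
            Real.rpow_mul (by norm_num), Real.rpow_natCast, ← hr]
          ring
  have hsum : Summable (fun j : ℕ => a (K + j)) := by
    refine Summable.of_nonneg_of_le (fun j => hanon _) (fun j => ?_)
      ((summable_geometric_of_lt_one hr0 hr1).mul_left (Amax * 2))
    calc a (K + j) ≤ Amax * (1/2:ℝ) ^ (j / m) := bound j
      _ ≤ Amax * (2 * r ^ j) := mul_le_mul_of_nonneg_left (hgeo j) hAmax0
      _ = (Amax * 2) * r ^ j := by ring
  have hsum' : Summable (fun j : ℕ => a (j + K)) := by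
    have e : (fun j : ℕ => a (j + K)) = fun j => a (K + j) := by
      funext j; rw [add_comm]
    rw [e]; exact hsum
  exact (summable_nat_add_iff K).mp hsum'




theorem singular_gronwall (T : ℝ) (hT : 0 < T) (σ : ℝ) (hσ0 : 0 ≤ σ) (hσ1 : σ < 1)
    (A M : ℝ) (hA : 0 ≤ A) (hM : 0 < M) (ψ : ℝ → ℝ)
    (hcont : ContinuousOn ψ (Set.Icc 0 T)) (hpos : ∀ t ∈ Set.Icc (0 : ℝ) T, 0 ≤ ψ t)
    (hineq : ∀ t ∈ Set.Icc (0 : ℝ) T,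
      ψ t ≤ A + M * ∫ s in (0 : ℝ)..t, (t - s) ^ (-σ) * ψ s) :
    (∀ t ∈ Set.Icc (0 : ℝ) T,
      ψ t ≤ A * ∑' n : ℕ, (M * Real.Gamma (1 - σ) * t ^ (1 - σ)) ^ n /
        Real.Gamma (n * (1 - σ) + 1)) ∧
    (A = 0 → ∀ t ∈ Set.Icc (0 : ℝ) T, ψ t = 0) := by
  set β : ℝ := 1 - σ with hβdef
  have hβ0 : 0 < β := by simp only [hβdef]; linarith
  have hσβ : -σ = β - 1 := by simp only [hβdef]; ring
  have hΓβ : 0 < Real.Gamma β := Real.Gamma_pos_of_pos hβ0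
  obtain ⟨u, hu, hC⟩ := isCompact_Icc.exists_isMaxOn
    (Set.nonempty_Icc.mpr hT.le) hcont
  set C : ℝ := ψ u with hCdef
  have hCb : ∀ s ∈ Set.Icc (0:ℝ) T, ψ s ≤ C := fun s hs => hC hs
  have hC0 : 0 ≤ C := hpos u hu
  have hGpos : ∀ y : ℝ, 0 ≤ y → 0 < Real.Gamma (y + 1) :=
    fun y hy => Real.Gamma_pos_of_pos (by linarith)
  set c : ℕ → ℝ := fun k => (M * Real.Gamma β) ^ k / Real.Gamma ((k:ℝ) * β + 1) with hcdef
  have hck0 : ∀ k, 0 ≤ c k := fun k =>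
    div_nonneg (pow_nonneg (by positivity) k) (hGpos _ (by positivity)).le
  have hc0one : c 0 = 1 := by
    simp [hcdef, Real.Gamma_one]
  have hckJ : ∀ (k : ℕ) (t : ℝ),
      c k * (M * (Real.Gamma ((k:ℝ)*β+1) * Real.Gamma β / Real.Gamma ((k:ℝ)*β+1+β)
        * t ^ ((k:ℝ)*β+1+β-1)))
      = c (k+1) * t ^ ((((k+1:ℕ)):ℝ) * β) := by
    intro k t
    have e1 : (((k+1:ℕ)):ℝ) * β + 1 = (k:ℝ)*β + 1 + β := by push_cast; ring
    have e2 : (((k+1:ℕ)):ℝ) * β = (k:ℝ)*β + 1 + β - 1 := by push_cast; ring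
    have g1 : Real.Gamma ((k:ℝ)*β + 1) ≠ 0 := (hGpos _ (by positivity)).ne'
    have g2 : Real.Gamma ((k:ℝ)*β + 1 + β) ≠ 0 := by
      have : (0:ℝ) < (k:ℝ)*β + 1 + β := by positivity
      exact (Real.Gamma_pos_of_pos this).ne'
    rw [hcdef]; dsimp only
    rw [e1, e2, pow_succ]
    field_simp
  -- the key induction
  have key : ∀ n : ℕ, ∀ t ∈ Set.Icc (0:ℝ) T,
      ψ t ≤ A * (∑ k ∈ Finset.range n, c k * t ^ ((k:ℝ)*β))
        + C * (c n * t ^ ((n:ℝ)*β)) := by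
    intro n
    induction n with
    | zero =>
      intro t ht
      simpa [hc0one] using hCb t ht
    | succ n IH =>
      intro t ht
      rcases eq_or_lt_of_le ht.1 with h0 | htpos
      · -- t = 0
        have ht0 : t = 0 := h0.symm
        subst ht0
        have hψ0 : ψ 0 ≤ A := by
          have := hineq 0 ⟨le_refl _, hT.le⟩
          simpa using this
        have hsum0 : (∑ k ∈ Finset.range (n+1), c k * (0:ℝ) ^ ((k:ℝ)*β)) = 1 := by
          rw [Finset.sum_eq_single_of_mem 0 (Finset.mem_range.mpr (Nat.succ_pos n))]
          · simp [hc0one]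
          · intro k _ hk
            have : ((k:ℝ)*β) ≠ 0 := by
              have : (0:ℝ) < (k:ℝ)*β := by
                have : (1:ℝ) ≤ (k:ℝ) := by exact_mod_cast Nat.one_le_iff_ne_zero.mpr hk
                nlinarith
              exact this.ne'
            rw [Real.zero_rpow this, mul_zero]
        have hlast : ((0:ℝ)) ^ ((((n+1:ℕ)):ℝ)*β) = 0 := by
          apply Real.zero_rpow
          have : (0:ℝ) < (((n+1:ℕ)):ℝ)*β := by positivity
          exact this.ne'
        rw [hsum0, hlast]
        simpa using hψ0
      · -- 0 < t
        have htT : t ≤ T := ht.2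
        set d : ℕ → ℝ := fun k => (if k = n then C else A) * c k with hddef
        set B : ℝ → ℝ := fun s => ∑ k ∈ Finset.range (n+1), d k * s ^ ((k:ℝ)*β)
          with hBdef
        have hBeq : ∀ s : ℝ,
            A * (∑ k ∈ Finset.range n, c k * s ^ ((k:ℝ)*β))
              + C * (c n * s ^ ((n:ℝ)*β)) = B s := by
          intro s
          rw [hBdef]; dsimp only
          rw [Finset.sum_range_succ, hddef]
          dsimp only
          rw [if_pos rfl, Finset.mul_sum]
          congr 1
          · refine Finset.sum_congr rfl fun k hk => ?_
            rw [if_neg (Nat.ne_of_lt (Finset.mem_range.mp hk))]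
            ring
          · ring
        have hψmeas : AEStronglyMeasurable ψ (volume.restrict (Set.Ioc 0 t)) := by
          have h1 : ContinuousOn ψ (Set.Icc 0 t) :=
            hcont.mono (Set.Icc_subset_Icc le_rfl htT)
          exact (h1.aestronglyMeasurable measurableSet_Icc).mono_measure
            (Measure.restrict_mono Set.Ioc_subset_Icc_self le_rfl)
        have hψint : IntervalIntegrable (fun s => (t-s) ^ (-σ) * ψ s) volume 0 t := by
          refine intInt t C σ htpos hσ1 ψ hψmeas fun s hs => ?_
          have hsT : s ∈ Set.Icc (0:ℝ) T := ⟨hs.1.le, hs.2.trans htT⟩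
          rw [abs_of_nonneg (hpos s hsT)]
          exact hCb s hsT
        have hIk : ∀ k : ℕ,
            IntervalIntegrable (fun s => (t-s) ^ (-σ) * (d k * s ^ ((k:ℝ)*β)))
              volume 0 t := by
          intro k
          refine intInt t (|d k| * T ^ ((k:ℝ)*β)) σ htpos hσ1 _ ?_ ?_
          · refine Measurable.aestronglyMeasurable ?_ |>.restrict
            fun_prop
          · intro s hs
            rw [abs_mul]
            refine mul_le_mul_of_nonneg_left ?_ (abs_nonneg _)
            rw [abs_of_nonneg (Real.rpow_nonneg hs.1.le _)]
            exact Real.rpow_le_rpow hs.1.le (hs.2.trans htT) (by positivity)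
        have hBint : IntervalIntegrable (fun s => (t-s) ^ (-σ) * B s) volume 0 t := by
          have e : (fun s => (t-s) ^ (-σ) * B s)
              = fun s => ∑ k ∈ Finset.range (n+1),
                  (t-s) ^ (-σ) * (d k * s ^ ((k:ℝ)*β)) := by
            funext s
            rw [hBdef]; dsimp only
            rw [Finset.mul_sum]
          have hsum := IntervalIntegrable.sum (μ := volume) (a := 0) (b := t)
            (Finset.range (n+1))
            (f := fun (k : ℕ) (s : ℝ) => (t-s) ^ (-σ) * (d k * s ^ ((k:ℝ)*β)))
            (fun k _ => hIk k)
          have e2 : (∑ i ∈ Finset.range (n+1),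
              fun s : ℝ => (t-s) ^ (-σ) * (d i * s ^ ((i:ℝ)*β)))
              = fun s : ℝ => ∑ k ∈ Finset.range (n+1),
                  (t-s) ^ (-σ) * (d k * s ^ ((k:ℝ)*β)) := by
            funext s
            simp [Finset.sum_apply]
          rw [e, ← e2]
          exact hsum
        have hmono : (∫ s in (0:ℝ)..t, (t-s) ^ (-σ) * ψ s)
            ≤ ∫ s in (0:ℝ)..t, (t-s) ^ (-σ) * B s := by
          refine intervalIntegral.integral_mono_on htpos.le hψint hBint fun s hs => ?_
          have hsT : s ∈ Set.Icc (0:ℝ) T := ⟨hs.1, hs.2.trans htT⟩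
          refine mul_le_mul_of_nonneg_left ?_ (Real.rpow_nonneg (by linarith [hs.2]) _)
          rw [← hBeq s]
          exact IH s hsT
        have hJ : ∀ k : ℕ,
            (∫ s in (0:ℝ)..t, (t-s) ^ (-σ) * (d k * s ^ ((k:ℝ)*β)))
            = d k * (Real.Gamma ((k:ℝ)*β+1) * Real.Gamma β / Real.Gamma ((k:ℝ)*β+1+β)
                * t ^ ((k:ℝ)*β+1+β-1)) := by
          intro k
          have e : ∀ s : ℝ, (t-s) ^ (-σ) * (d k * s ^ ((k:ℝ)*β))
              = d k * (s ^ (((k:ℝ)*β+1)-1) * (t-s) ^ (β-1)) := by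
            intro s
            rw [show ((k:ℝ)*β+1)-1 = (k:ℝ)*β by ring, ← hσβ]
            ring
          simp only [e]
          rw [intervalIntegral.integral_const_mul,
            realBetaScaled ((k:ℝ)*β+1) β t (by positivity) hβ0 htpos]
        have hBval : (∫ s in (0:ℝ)..t, (t-s) ^ (-σ) * B s)
            = ∑ k ∈ Finset.range (n+1),
                d k * (Real.Gamma ((k:ℝ)*β+1) * Real.Gamma β / Real.Gamma ((k:ℝ)*β+1+β)
                  * t ^ ((k:ℝ)*β+1+β-1)) := by
          have e : (fun s => (t-s) ^ (-σ) * B s)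
              = fun s => ∑ k ∈ Finset.range (n+1),
                  (t-s) ^ (-σ) * (d k * s ^ ((k:ℝ)*β)) := by
            funext s
            rw [hBdef]; dsimp only
            rw [Finset.mul_sum]
          rw [e, intervalIntegral.integral_finset_sum (μ := volume)
            (f := fun (k : ℕ) (s : ℝ) => (t-s) ^ (-σ) * (d k * s ^ ((k:ℝ)*β)))
            (fun k _ => hIk k)]
          exact Finset.sum_congr rfl fun k _ => hJ k
        calc ψ t ≤ A + M * ∫ s in (0:ℝ)..t, (t-s) ^ (-σ) * ψ s := hineq t ht
          _ ≤ A + M * ∫ s in (0:ℝ)..t, (t-s) ^ (-σ) * B s := by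
              have := mul_le_mul_of_nonneg_left hmono hM.le
              linarith
          _ = A + ∑ k ∈ Finset.range (n+1),
                (if k = n then C else A) * (c (k+1) * t ^ ((((k+1:ℕ)):ℝ) * β)) := by
              rw [hBval, Finset.mul_sum]
              congr 1
              refine Finset.sum_congr rfl fun k _ => ?_
              rw [hddef]; dsimp only
              rw [← hckJ k t]
              ring
          _ = A * (∑ k ∈ Finset.range (n+1), c k * t ^ ((k:ℝ)*β))
              + C * (c (n+1) * t ^ ((((n+1:ℕ)):ℝ)*β)) := by
              rw [Finset.sum_range_succ, if_pos rfl]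
              rw [Finset.sum_range_succ']
              have h00 : c 0 * t ^ (((0:ℕ):ℝ)*β) = 1 := by
                simp [hc0one]
              rw [h00]
              have : ∀ k ∈ Finset.range n,
                  (if k = n then C else A) * (c (k+1) * t ^ ((((k+1:ℕ)):ℝ) * β))
                  = A * (c (k+1) * t ^ ((((k+1:ℕ)):ℝ) * β)) := by
                intro k hk
                rw [if_neg (Nat.ne_of_lt (Finset.mem_range.mp hk))]
              rw [Finset.sum_congr rfl this, ← Finset.mul_sum]
              push_cast
              ring
  -- conclusion
  have main : ∀ t ∈ Set.Icc (0:ℝ) T,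
      ψ t ≤ A * ∑' n : ℕ, (M * Real.Gamma β * t ^ β) ^ n / Real.Gamma ((n:ℝ) * β + 1) := by
    intro t ht
    set x : ℝ := M * Real.Gamma β * t ^ β with hxdef
    have hx0 : 0 ≤ x := by
      have := Real.rpow_nonneg ht.1 β
      positivity
    have hsummable : Summable (fun n : ℕ => x ^ n / Real.Gamma ((n:ℝ) * β + 1)) :=
      ML_summable β x hβ0 hx0
    have hterm : ∀ n : ℕ, c n * t ^ ((n:ℝ)*β) = x ^ n / Real.Gamma ((n:ℝ)*β+1) := by
      intro n
      rw [hcdef]; dsimp only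
      rw [hxdef, mul_pow, mul_comm ((n:ℝ)) β, Real.rpow_mul ht.1, Real.rpow_natCast]
      ring
    have hterm0 : ∀ n : ℕ, 0 ≤ x ^ n / Real.Gamma ((n:ℝ)*β+1) := fun n =>
      div_nonneg (pow_nonneg hx0 n) (hGpos _ (by positivity)).le
    have hbound : ∀ n : ℕ, ψ t ≤ A * (∑' k : ℕ, x ^ k / Real.Gamma ((k:ℝ)*β+1))
        + C * (x ^ n / Real.Gamma ((n:ℝ)*β+1)) := by
      intro n
      have h1 := key n t ht
      simp only [hterm] at h1
      refine h1.trans ?_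
      have h2 : (∑ k ∈ Finset.range n, x ^ k / Real.Gamma ((k:ℝ)*β+1))
          ≤ ∑' k : ℕ, x ^ k / Real.Gamma ((k:ℝ)*β+1) :=
        Summable.sum_le_tsum _ (fun k _ => hterm0 k) hsummable
      have := mul_le_mul_of_nonneg_left h2 hA
      linarith
    have htend : Filter.Tendsto
        (fun n : ℕ => A * (∑' k : ℕ, x ^ k / Real.Gamma ((k:ℝ)*β+1))
          + C * (x ^ n / Real.Gamma ((n:ℝ)*β+1))) Filter.atTop
        (nhds (A * (∑' k : ℕ, x ^ k / Real.Gamma ((k:ℝ)*β+1)) + C * 0)) := by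
      exact Filter.Tendsto.const_add _ ((hsummable.tendsto_atTop_zero).const_mul C)
    have := ge_of_tendsto' htend hbound
    simpa using this
  refine ⟨main, fun hA0 t ht => le_antisymm ?_ (hpos t ht)⟩
  have := main t ht
  rw [hA0, zero_mul] at this
  exact this
end
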